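/- Let G = (V, E) be a graph and L a positive integer with L ≤ |V| and C(L,2) ≤ |E|, where C(L,2) = L(L−1)/2. Construct a DAG D with a fixed processor assignment p : V(D) → {1, 2} as follows: a node on processor 1 for each v ∈ V and a node on processor 2 for each e ∈ E, with an arc from the node of v to the node of e whenever v ∈ e; and a disjoint component consisting of four consecutive layers of sizes L, C(L,2), |V| − L, and |E| − C(L,2), assigned to processors 2, 1, 2, 1 respectively, where every node of each layer has an arc to every node of the next layer. Then D admits a schedule respecting p with makespan |V| + |E| if and only if G contains a clique of size L. -/
import Mathlib


open Finset

/-- The node type of the clique-scheduling DAG: a node for each vertex of `G`, a node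
for each edge of `G`, and a disjoint four-layer component with layers of sizes `L`,
`C(L,2)`, `|V| - L` and `|E| - C(L,2)`. -/
abbrev CliqueNode (V : Type*) [Fintype V] [DecidableEq V] (G : SimpleGraph V)
    [DecidableRel G.Adj] (L : ℕ) :=
  (V ⊕ {e // e ∈ G.edgeFinset}) ⊕
    ((Fin L ⊕ Fin (Nat.choose L 2)) ⊕
      (Fin (Fintype.card V - L) ⊕ Fin (G.edgeFinset.card - Nat.choose L 2)))

/-- The arc relation: an arc from the node of `v` to the node of `e` whenever `v ∈ e`,
and, in the four-layer component, an arc from every node of a layer to every node of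
the next layer. -/
def cliqueArc {V : Type*} [Fintype V] [DecidableEq V] (G : SimpleGraph V)
    [DecidableRel G.Adj] (L : ℕ) :
    CliqueNode V G L → CliqueNode V G L → Prop
  | .inl (.inl v), .inl (.inr e) => v ∈ (e.1 : Sym2 V)
  | .inr (.inl (.inl _)), .inr (.inl (.inr _)) => True
  | .inr (.inl (.inr _)), .inr (.inr (.inl _)) => True
  | .inr (.inr (.inl _)), .inr (.inr (.inr _)) => True
  | _, _ => False

/-- The fixed processor assignment: vertex nodes on processor `1`, edge nodes on
processor `2`; the four layers of the extra component on processors `2, 1, 2, 1`. -/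
def cliqueProc {V : Type*} [Fintype V] [DecidableEq V] (G : SimpleGraph V)
    [DecidableRel G.Adj] (L : ℕ) :
    CliqueNode V G L → ℕ
  | .inl (.inl _) => 1
  | .inl (.inr _) => 2
  | .inr (.inl (.inl _)) => 2
  | .inr (.inl (.inr _)) => 1
  | .inr (.inr (.inl _)) => 2
  | .inr (.inr (.inr _)) => 1

section Helpers

variable {V : Type*} [Fintype V] [DecidableEq V]

/-- underlying pair of a `Sym2` as a finset -/
private def ps (e : Sym2 V) : Finset V := Finset.univ.filter (· ∈ e)

private lemma mem_ps {v : V} {e : Sym2 V} : v ∈ ps e ↔ v ∈ e := by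
  simp [ps]

private lemma ps_inj {e e' : Sym2 V} (h : ps e = ps e') : e = e' := by
  refine Sym2.ext fun x => ?_
  rw [← mem_ps, ← mem_ps, h]

private lemma ps_pair {a b : V} (hab : a ≠ b) : ps s(a, b) = {a, b} := by
  ext x
  simp [mem_ps, Sym2.mem_iff, Finset.mem_insert]

private lemma card_ps {e : Sym2 V} (he : ¬ e.IsDiag) : (ps e).card = 2 := by
  induction e using Sym2.ind with
  | _ a b =>
    rw [Sym2.mk_isDiag_iff] at he
    rw [ps_pair he, Finset.card_pair he]

private lemma ps_mem_powersetCard {G : SimpleGraph V} [DecidableRel G.Adj] {S : Finset V}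
    {e : Sym2 V} (heE : e ∈ G.edgeFinset) (hmem : ∀ v ∈ e, v ∈ S) :
    ps e ∈ S.powersetCard 2 := by
  rw [Finset.mem_powersetCard]
  exact ⟨fun x hx => hmem x (mem_ps.1 hx), card_ps (G.not_isDiag_of_mem_edgeFinset heE)⟩

/-- core counting lemma for the "schedule → clique" direction -/
private lemma core {G : SimpleGraph V} [DecidableRel G.Adj] {L : ℕ} (hL2 : 2 ≤ L)
    (S : Finset V) (F : Finset (Sym2 V)) (hFE : F ⊆ G.edgeFinset)
    (hmem : ∀ e ∈ F, ∀ v ∈ e, v ∈ S) (hSL : S.card ≤ L)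
    (hCF : L.choose 2 ≤ F.card) : G.IsNClique L S := by
  have himg : F.image ps ⊆ S.powersetCard 2 := by
    intro t ht
    obtain ⟨e, he, rfl⟩ := Finset.mem_image.1 ht
    exact ps_mem_powersetCard (hFE he) (hmem e he)
  have hcard : (F.image ps).card = F.card :=
    Finset.card_image_of_injOn fun e _ e' _ h => ps_inj h
  have h1 : L.choose 2 ≤ S.card.choose 2 := by
    calc L.choose 2 ≤ F.card := hCF
      _ = (F.image ps).card := hcard.symm
      _ ≤ (S.powersetCard 2).card := Finset.card_le_card himg
      _ = S.card.choose 2 := Finset.card_powersetCard 2 S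
  have hScard : S.card = L := by
    by_contra hne
    have hlt : S.card ≤ L - 1 := by omega
    have h2 : S.card.choose 2 ≤ (L-1).choose 2 := Nat.choose_le_choose 2 hlt
    obtain ⟨m, rfl⟩ : ∃ m, L = m + 1 := ⟨L - 1, by omega⟩
    simp only [Nat.add_sub_cancel] at h2
    have hss : (m+1).choose 2 = m.choose 1 + m.choose 2 := Nat.choose_succ_succ m 1
    have h1m : m.choose 1 = m := Nat.choose_one_right m
    omega
  have heq : F.image ps = S.powersetCard 2 := by
    apply Finset.eq_of_subset_of_card_le himg
    rw [Finset.card_powersetCard, hcard, hScard]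
    exact hCF
  refine ⟨?_, hScard⟩
  rw [SimpleGraph.isClique_iff]
  intro a ha b hb hab
  have hpair : ({a, b} : Finset V) ∈ S.powersetCard 2 := by
    rw [Finset.mem_powersetCard]
    refine ⟨?_, Finset.card_pair hab⟩
    intro x hx
    rcases Finset.mem_insert.1 hx with rfl | hx
    · exact ha
    · rw [Finset.mem_singleton] at hx; subst hx; exact hb
  rw [← heq] at hpair
  obtain ⟨e, heF, hpe⟩ := Finset.mem_image.1 hpair
  have haE : a ∈ e := mem_ps.1 (hpe ▸ (by simp : a ∈ ({a,b} : Finset V)))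
  have hbE : b ∈ e := mem_ps.1 (hpe ▸ (by simp : b ∈ ({a,b} : Finset V)))
  have heq2 : e = s(a, b) := (Sym2.mem_and_mem_iff hab).1 ⟨haE, hbE⟩
  have hE := hFE heF
  rw [heq2, SimpleGraph.mem_edgeFinset, SimpleGraph.mem_edgeSet] at hE
  exact hE

/-- number of edges inside a clique -/
private lemma cliqueEdges {G : SimpleGraph V} [DecidableRel G.Adj] {L : ℕ} {S : Finset V}
    (hS : G.IsNClique L S) :
    (G.edgeFinset.filter (fun e => ∀ v ∈ e, v ∈ S)).card = L.choose 2 := by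
  have := Finset.card_bij (s := G.edgeFinset.filter (fun e => ∀ v ∈ e, v ∈ S))
    (t := S.powersetCard 2) (fun e _ => ps e)
    (fun e he => by
      rw [Finset.mem_filter] at he
      exact ps_mem_powersetCard he.1 he.2)
    (fun e _ e' _ h => ps_inj h)
    (fun t ht => by
      rw [Finset.mem_powersetCard] at ht
      obtain ⟨a, b, hab, rfl⟩ := Finset.card_eq_two.1 ht.2
      have haS : a ∈ S := ht.1 (by simp)
      have hbS : b ∈ S := ht.1 (by simp)
      have hadj : G.Adj a b := hS.1 haS hbS hab
      refine ⟨s(a, b), ?_, ps_pair hab⟩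
      rw [Finset.mem_filter]
      refine ⟨by rw [SimpleGraph.mem_edgeFinset, SimpleGraph.mem_edgeSet]; exact hadj, ?_⟩
      intro v hv
      rcases Sym2.mem_iff.1 hv with rfl | rfl <;> assumption)
  rw [this, Finset.card_powersetCard, hS.2]

private lemma extract {G : SimpleGraph V} [DecidableRel G.Adj] {L : ℕ}
    (hL2 : 2 ≤ L) (hLV : L < Fintype.card V) (hLE : L.choose 2 ≤ G.edgeFinset.card)
    (τ : CliqueNode V G L → ℕ)
    (h1 : ∀ v, 1 ≤ τ v)
    (h2 : ∀ u v, u ≠ v → cliqueProc G L u = cliqueProc G L v → τ u ≠ τ v)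
    (h3 : ∀ u v, cliqueArc G L u v → τ u < τ v)
    (h4 : ∀ v, τ v ≤ Fintype.card V + G.edgeFinset.card) :
    ∃ S : Finset V, G.IsNClique L S := by
  classical
  have hC1 : 1 ≤ L.choose 2 := Nat.choose_pos hL2
  set TE : Finset ℕ :=
    univ.image (fun e : {e // e ∈ G.edgeFinset} => τ (.inl (.inr e))) with hTEdef
  set T1 : Finset ℕ :=
    univ.image (fun i : Fin L => τ (.inr (.inl (.inl i)))) with hT1def
  set T2 : Finset ℕ :=
    univ.image (fun j : Fin (L.choose 2) => τ (.inr (.inl (.inr j)))) with hT2def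
  set T3 : Finset ℕ :=
    univ.image (fun k : Fin (Fintype.card V - L) => τ (.inr (.inr (.inl k)))) with hT3def
  set T4 : Finset ℕ :=
    univ.image (fun m : Fin (G.edgeFinset.card - L.choose 2) => τ (.inr (.inr (.inr m))))
    with hT4def
  have hinjE : Function.Injective
      (fun e : {e // e ∈ G.edgeFinset} => τ (.inl (.inr e))) := by
    intro x y hxy; by_contra hne
    exact h2 (.inl (.inr x)) (.inl (.inr y)) (fun h => hne (by simpa using h)) rfl hxy
  have hinj1 : Function.Injective (fun i : Fin L => τ (.inr (.inl (.inl i)))) := by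
    intro x y hxy; by_contra hne
    exact h2 (.inr (.inl (.inl x))) (.inr (.inl (.inl y))) (fun h => hne (by simpa using h)) rfl hxy
  have hinj3 : Function.Injective
      (fun k : Fin (Fintype.card V - L) => τ (.inr (.inr (.inl k)))) := by
    intro x y hxy; by_contra hne
    exact h2 (.inr (.inr (.inl x))) (.inr (.inr (.inl y))) (fun h => hne (by simpa using h)) rfl hxy
  have hcTE : TE.card = G.edgeFinset.card := by
    rw [hTEdef, card_image_of_injective _ hinjE, card_univ, Fintype.card_coe]
  have hcT1 : T1.card = L := by
    rw [hT1def, card_image_of_injective _ hinj1, card_univ, Fintype.card_fin]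
  have hcT2 : T2.card = L.choose 2 := by
    rw [hT2def, card_image_of_injective _ (fun x y hxy => by
      by_contra hne
      exact h2 (.inr (.inl (.inr x))) (.inr (.inl (.inr y)))
        (fun h => hne (by simpa using h)) rfl hxy),
      card_univ, Fintype.card_fin]
  have hcT3 : T3.card = Fintype.card V - L := by
    rw [hT3def, card_image_of_injective _ hinj3, card_univ, Fintype.card_fin]
  have hcT4 : T4.card = G.edgeFinset.card - L.choose 2 := by
    rw [hT4def, card_image_of_injective _ (fun x y hxy => by
      by_contra hne
      exact h2 (.inr (.inr (.inr x))) (.inr (.inr (.inr y)))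
        (fun h => hne (by simpa using h)) rfl hxy),
      card_univ, Fintype.card_fin]
  -- order relations between layers
  have hT12 : ∀ x ∈ T1, ∀ y ∈ T2, x < y := by
    intro x hx y hy
    obtain ⟨i, -, rfl⟩ := mem_image.1 hx
    obtain ⟨j, -, rfl⟩ := mem_image.1 hy
    exact h3 _ _ trivial
  have hT23 : ∀ x ∈ T2, ∀ y ∈ T3, x < y := by
    intro x hx y hy
    obtain ⟨i, -, rfl⟩ := mem_image.1 hx
    obtain ⟨j, -, rfl⟩ := mem_image.1 hy
    exact h3 _ _ trivial
  have hT34 : ∀ x ∈ T3, ∀ y ∈ T4, x < y := by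
    intro x hx y hy
    obtain ⟨i, -, rfl⟩ := mem_image.1 hx
    obtain ⟨j, -, rfl⟩ := mem_image.1 hy
    exact h3 _ _ trivial
  -- the processor-2 times exactly fill [1, N+M]
  have hdET1 : Disjoint TE T1 := by
    rw [Finset.disjoint_left]
    rintro t htE ht1
    obtain ⟨e, -, rfl⟩ := mem_image.1 htE
    obtain ⟨i, -, heq⟩ := mem_image.1 ht1
    exact h2 (.inr (.inl (.inl i))) (.inl (.inr e)) (by simp) rfl heq
  have hdET3 : Disjoint TE T3 := by
    rw [Finset.disjoint_left]
    rintro t htE ht3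
    obtain ⟨e, -, rfl⟩ := mem_image.1 htE
    obtain ⟨k, -, heq⟩ := mem_image.1 ht3
    exact h2 (.inr (.inr (.inl k))) (.inl (.inr e)) (by simp) rfl heq
  have hdT13 : Disjoint T1 T3 := by
    rw [Finset.disjoint_left]
    rintro t ht1 ht3
    obtain ⟨i, -, rfl⟩ := mem_image.1 ht1
    obtain ⟨k, -, heq⟩ := mem_image.1 ht3
    exact h2 (.inr (.inr (.inl k))) (.inr (.inl (.inl i))) (by simp) rfl heq
  have hunion : TE ∪ T1 ∪ T3 = Icc 1 (Fintype.card V + G.edgeFinset.card) := by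
    apply eq_of_subset_of_card_le
    · intro t ht
      rcases mem_union.1 ht with ht | ht
      · rcases mem_union.1 ht with ht | ht
        · obtain ⟨x, -, rfl⟩ := mem_image.1 ht; exact mem_Icc.2 ⟨h1 _, h4 _⟩
        · obtain ⟨x, -, rfl⟩ := mem_image.1 ht; exact mem_Icc.2 ⟨h1 _, h4 _⟩
      · obtain ⟨x, -, rfl⟩ := mem_image.1 ht; exact mem_Icc.2 ⟨h1 _, h4 _⟩
    · rw [Nat.card_Icc,
        card_union_of_disjoint (Finset.disjoint_union_left.2 ⟨hdET3, hdT13⟩),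
        card_union_of_disjoint hdET1, hcTE, hcT1, hcT3]
      omega
  -- the maximum of the second layer equals L + C
  have hne2 : T2.Nonempty :=
    ⟨_, mem_image_of_mem _ (mem_univ (⟨0, hC1⟩ : Fin (L.choose 2)))⟩
  set b := T2.max' hne2 with hbdef
  have hbT2 : b ∈ T2 := T2.max'_mem hne2
  have hbn : b ≤ Fintype.card V + G.edgeFinset.card := by
    obtain ⟨j, -, heq⟩ := mem_image.1 hbT2
    rw [← heq]; exact h4 _
  have hbl : L + L.choose 2 ≤ b := by
    have hsub : T1 ∪ T2 ⊆ Icc 1 b := by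
      intro t ht
      rcases mem_union.1 ht with ht | ht
      · refine mem_Icc.2 ⟨?_, le_of_lt (hT12 t ht b hbT2)⟩
        obtain ⟨i, -, rfl⟩ := mem_image.1 ht; exact h1 _
      · refine mem_Icc.2 ⟨?_, T2.le_max' t ht⟩
        obtain ⟨j, -, rfl⟩ := mem_image.1 ht; exact h1 _
    have hd : Disjoint T1 T2 := by
      rw [Finset.disjoint_left]
      intro t ht1 ht2
      exact lt_irrefl t (hT12 t ht1 t ht2)
    have := Finset.card_le_card hsub
    rw [card_union_of_disjoint hd, hcT1, hcT2, Nat.card_Icc] at this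
    omega
  have hbu : b = L + L.choose 2 := by
    have hne3 : T3.Nonempty :=
      ⟨_, mem_image_of_mem _ (mem_univ (⟨0, by omega⟩ : Fin (Fintype.card V - L)))⟩
    obtain ⟨t3, ht3⟩ := hne3
    have hsub : T3 ∪ T4 ⊆ Ioc b (Fintype.card V + G.edgeFinset.card) := by
      intro t ht
      rcases mem_union.1 ht with ht | ht
      · refine mem_Ioc.2 ⟨hT23 b hbT2 t ht, ?_⟩
        obtain ⟨k, -, rfl⟩ := mem_image.1 ht; exact h4 _
      · refine mem_Ioc.2 ⟨lt_trans (hT23 b hbT2 t3 ht3) (hT34 t3 ht3 t ht), ?_⟩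
        obtain ⟨m, -, rfl⟩ := mem_image.1 ht; exact h4 _
    have hd : Disjoint T3 T4 := by
      rw [Finset.disjoint_left]
      intro t hta htb
      exact lt_irrefl t (hT34 t hta t htb)
    have := Finset.card_le_card hsub
    rw [card_union_of_disjoint hd, hcT3, hcT4, Nat.card_Ioc] at this
    omega
  -- the maximum of the first layer equals L
  have hne1 : T1.Nonempty :=
    ⟨_, mem_image_of_mem _ (mem_univ (⟨0, by omega⟩ : Fin L))⟩
  set a := T1.max' hne1 with hadef
  have haT1 : a ∈ T1 := T1.max'_mem hne1
  have hal : L ≤ a := by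
    have hsub : T1 ⊆ Icc 1 a := by
      intro t ht
      refine mem_Icc.2 ⟨?_, T1.le_max' t ht⟩
      obtain ⟨i, -, rfl⟩ := mem_image.1 ht; exact h1 _
    have := Finset.card_le_card hsub
    rw [hcT1, Nat.card_Icc] at this
    omega
  have hT2sub : T2 ⊆ Ioc a b := fun t ht =>
    mem_Ioc.2 ⟨hT12 a haT1 t ht, T2.le_max' t ht⟩
  have hau : a = L := by
    have := Finset.card_le_card hT2sub
    rw [hcT2, Nat.card_Ioc] at this
    omega
  have hT2eq : T2 = Ioc L (L + L.choose 2) := by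
    apply eq_of_subset_of_card_le
    · intro t ht
      have h := mem_Ioc.1 (hT2sub ht)
      exact mem_Ioc.2 ⟨by omega, by omega⟩
    · rw [hcT2, Nat.card_Ioc]; omega
  have hT1eq : T1 = Icc 1 L := by
    apply eq_of_subset_of_card_le
    · intro t ht
      refine mem_Icc.2 ⟨?_, hau ▸ T1.le_max' t ht⟩
      obtain ⟨i, -, rfl⟩ := mem_image.1 ht; exact h1 _
    · rw [hcT1, Nat.card_Icc]; omega
  -- the candidate clique and its edges
  set S : Finset V := univ.filter (fun v => τ (.inl (.inl v)) ≤ L) with hSdef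
  have hSL : S.card ≤ L := by
    have hinjS : Set.InjOn (fun v : V => τ (.inl (.inl v))) S := by
      intro x _ y _ hxy
      by_contra hne
      exact h2 (.inl (.inl x)) (.inl (.inl y)) (fun h => hne (by simpa using h)) rfl hxy
    have hsub : S.image (fun v : V => τ (.inl (.inl v))) ⊆ Icc 1 L := by
      intro t ht
      obtain ⟨v, hv, rfl⟩ := mem_image.1 ht
      exact mem_Icc.2 ⟨h1 _, (mem_filter.1 hv).2⟩
    have := Finset.card_le_card hsub
    rw [Finset.card_image_of_injOn hinjS, Nat.card_Icc] at this
    omega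
  set F' : Finset {e // e ∈ G.edgeFinset} :=
    univ.filter (fun e : {e // e ∈ G.edgeFinset} =>
      τ (.inl (.inr e)) ≤ L + L.choose 2) with hF'def
  set F : Finset (Sym2 V) := F'.image (fun e => (e.1 : Sym2 V)) with hFdef2
  have hFsub : F ⊆ G.edgeFinset := by
    intro e he
    obtain ⟨e', -, rfl⟩ := mem_image.1 he
    exact e'.2
  have hcF : F.card = F'.card :=
    card_image_of_injective _ Subtype.val_injective
  have hCF' : L.choose 2 ≤ F'.card := by
    have hsub : Ioc L (L + L.choose 2) ⊆
        F'.image (fun e => τ (.inl (.inr e))) := by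
      intro t ht
      have ht' := mem_Ioc.1 ht
      have htI : t ∈ TE ∪ T1 ∪ T3 := by
        rw [hunion]
        exact mem_Icc.2 ⟨by omega, by omega⟩
      rcases mem_union.1 htI with htI | htI
      · rcases mem_union.1 htI with htI | htI
        · obtain ⟨e, -, rfl⟩ := mem_image.1 htI
          refine mem_image_of_mem _ (mem_filter.2 ⟨mem_univ _, ?_⟩)
          exact ht'.2
        · rw [hT1eq] at htI
          have := (mem_Icc.1 htI).2
          omega
      · have := hT23 b hbT2 t htI
        omega
    calc L.choose 2 = (Ioc L (L + L.choose 2)).card := by rw [Nat.card_Ioc]; omega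
      _ ≤ (F'.image (fun e => τ (.inl (.inr e)))).card := Finset.card_le_card hsub
      _ ≤ F'.card := Finset.card_image_le
  have hmem : ∀ e ∈ F, ∀ v ∈ e, v ∈ S := by
    intro e he v hv
    obtain ⟨e', he', rfl⟩ := mem_image.1 he
    have hlt : τ (.inl (.inl v)) < τ (.inl (.inr e')) := h3 _ _ hv
    have hle : τ (.inl (.inr e')) ≤ L + L.choose 2 := (mem_filter.1 he').2
    rw [hSdef, mem_filter]
    refine ⟨mem_univ _, ?_⟩
    by_contra hgt
    push_neg at hgt
    have hmem2 : τ (.inl (.inl v)) ∈ T2 := by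
      rw [hT2eq]
      exact mem_Ioc.2 ⟨hgt, by omega⟩
    obtain ⟨j, -, hj⟩ := mem_image.1 hmem2
    exact h2 (.inr (.inl (.inr j))) (.inl (.inl v)) (by simp) rfl hj
  exact ⟨S, core hL2 S F hFsub hmem hSL (hcF ▸ hCF')⟩

private noncomputable def sched (G : SimpleGraph V) [DecidableRel G.Adj] (L : ℕ)
    (S : Finset V) (F : Finset (Sym2 V))
    (eS : {v // v ∈ S} ≃ Fin L)
    (eSc : {v // v ∉ S} ≃ Fin (Fintype.card V - L))
    (eF : {e : {e // e ∈ G.edgeFinset} // e.1 ∈ F} ≃ Fin (L.choose 2))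
    (eFc : {e : {e // e ∈ G.edgeFinset} // e.1 ∉ F} ≃ Fin (G.edgeFinset.card - L.choose 2)) :
    CliqueNode V G L → ℕ
  | .inl (.inl v) => if h : v ∈ S then (eS ⟨v, h⟩ : ℕ) + 1
      else L + L.choose 2 + 1 + (eSc ⟨v, h⟩ : ℕ)
  | .inl (.inr e) => if h : e.1 ∈ F then L + 1 + (eF ⟨e, h⟩ : ℕ)
      else Fintype.card V + L.choose 2 + 1 + (eFc ⟨e, h⟩ : ℕ)
  | .inr (.inl (.inl i)) => (i : ℕ) + 1
  | .inr (.inl (.inr j)) => L + 1 + (j : ℕ)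
  | .inr (.inr (.inl k)) => L + L.choose 2 + 1 + (k : ℕ)
  | .inr (.inr (.inr m)) => Fintype.card V + L.choose 2 + 1 + (m : ℕ)

private lemma construct {G : SimpleGraph V} [DecidableRel G.Adj] {L : ℕ}
    (hLV : L ≤ Fintype.card V) (hLE : L.choose 2 ≤ G.edgeFinset.card)
    {S : Finset V} (hS : G.IsNClique L S)
    (hF : (G.edgeFinset.filter (fun e => ∀ v ∈ e, v ∈ S)).card = L.choose 2) :
    ∃ τ : CliqueNode V G L → ℕ,
      (∀ v, 1 ≤ τ v) ∧
      (∀ u v, u ≠ v → cliqueProc G L u = cliqueProc G L v → τ u ≠ τ v) ∧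
      (∀ u v, cliqueArc G L u v → τ u < τ v) ∧
      (∀ v, τ v ≤ Fintype.card V + G.edgeFinset.card) := by
  classical
  set N := Fintype.card V with hN
  set M := G.edgeFinset.card with hM
  set C := L.choose 2 with hC
  set F : Finset (Sym2 V) := G.edgeFinset.filter (fun e => ∀ v ∈ e, v ∈ S) with hFdef
  have eS : {v // v ∈ S} ≃ Fin L :=
    Fintype.equivFinOfCardEq (by rw [Fintype.card_coe, hS.2])
  have eSc : {v // v ∉ S} ≃ Fin (N - L) :=
    Fintype.equivFinOfCardEq (by
      rw [Fintype.card_subtype_compl, Fintype.card_coe, hS.2])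
  have eF : {e : {e // e ∈ G.edgeFinset} // e.1 ∈ F} ≃ Fin C :=
    Fintype.equivFinOfCardEq (by
      rw [Fintype.card_congr (Equiv.subtypeSubtypeEquivSubtype
        (fun {e} (he : e ∈ F) => (Finset.mem_filter.1 he).1)), Fintype.card_coe, hF])
  have eFc : {e : {e // e ∈ G.edgeFinset} // e.1 ∉ F} ≃ Fin (M - C) :=
    Fintype.equivFinOfCardEq (by
      rw [Fintype.card_subtype_compl, Fintype.card_coe,
        Fintype.card_congr (Equiv.subtypeSubtypeEquivSubtype
          (fun {e} (he : e ∈ F) => (Finset.mem_filter.1 he).1)), Fintype.card_coe, hF])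
  refine ⟨sched G L S F eS eSc eF eFc, ?_, ?_, ?_, ?_⟩
  · rintro ((v | e) | ((i | j) | (k | m))) <;> simp only [sched] <;> try omega
    · split_ifs <;> omega
    · split_ifs <;> omega
  · rintro ((a | a) | ((a | a) | (a | a))) ((b | b) | ((b | b) | (b | b))) huv hproc <;>
      first
        | (simp [cliqueProc] at hproc; done)
        | simp only [sched]
    -- vx vx
    · split_ifs with h1 h2 h2
      · intro heq
        have hval : ((eS ⟨a, h1⟩ : Fin L) : ℕ) = ((eS ⟨b, h2⟩ : Fin L) : ℕ) := by omega
        have : a = b := Subtype.ext_iff.1 (eS.injective (Fin.val_injective hval))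
        exact huv (by rw [this])
      · have := (eS ⟨a, h1⟩).isLt; omega
      · have := (eS ⟨b, h2⟩).isLt; omega
      · intro heq
        have hval : ((eSc ⟨a, h1⟩ : Fin _) : ℕ) = ((eSc ⟨b, h2⟩ : Fin _) : ℕ) := by omega
        have : a = b := Subtype.ext_iff.1 (eSc.injective (Fin.val_injective hval))
        exact huv (by rw [this])
    -- vx l2
    · split_ifs with h1
      · have := (eS ⟨a, h1⟩).isLt; omega
      · have := b.isLt; omega
    -- vx l4
    · split_ifs with h1
      · have := (eS ⟨a, h1⟩).isLt; omega
      · have := (eSc ⟨a, h1⟩).isLt; omega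
    -- ed ed
    · split_ifs with h1 h2 h2
      · intro heq
        have hval : ((eF ⟨a, h1⟩ : Fin _) : ℕ) = ((eF ⟨b, h2⟩ : Fin _) : ℕ) := by omega
        have : a = b := Subtype.ext_iff.1 (eF.injective (Fin.val_injective hval))
        exact huv (by rw [this])
      · have := (eF ⟨a, h1⟩).isLt; omega
      · have := (eF ⟨b, h2⟩).isLt; omega
      · intro heq
        have hval : ((eFc ⟨a, h1⟩ : Fin _) : ℕ) = ((eFc ⟨b, h2⟩ : Fin _) : ℕ) := by omega
        have : a = b := Subtype.ext_iff.1 (eFc.injective (Fin.val_injective hval))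
        exact huv (by rw [this])
    -- ed l1
    · split_ifs with h1
      · have := b.isLt; have := (eF ⟨a, h1⟩).isLt; omega
      · have := b.isLt; omega
    -- ed l3
    · split_ifs with h1
      · have := (eF ⟨a, h1⟩).isLt; omega
      · have := b.isLt; omega
    -- l1 ed
    · split_ifs with h1
      · have := a.isLt; have := (eF ⟨b, h1⟩).isLt; omega
      · have := a.isLt; omega
    -- l1 l1
    · intro heq
      have hval : (a : ℕ) = (b : ℕ) := by omega
      exact huv (by rw [show a = b from Fin.val_injective hval])
    -- l1 l3
    · have := a.isLt; omega
    -- l2 vx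
    · split_ifs with h1
      · have := (eS ⟨b, h1⟩).isLt; omega
      · have := a.isLt; omega
    -- l2 l2
    · intro heq
      have hval : (a : ℕ) = (b : ℕ) := by omega
      exact huv (by rw [show a = b from Fin.val_injective hval])
    -- l2 l4
    · have := a.isLt; omega
    -- l3 ed
    · split_ifs with h1
      · have := (eF ⟨b, h1⟩).isLt; omega
      · have := a.isLt; omega
    -- l3 l1
    · have := b.isLt; omega
    -- l3 l3
    · intro heq
      have hval : (a : ℕ) = (b : ℕ) := by omega
      exact huv (by rw [show a = b from Fin.val_injective hval])
    -- l4 vx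
    · split_ifs with h1
      · have := (eS ⟨b, h1⟩).isLt; omega
      · have := (eSc ⟨b, h1⟩).isLt; omega
    -- l4 l2
    · have := b.isLt; omega
    -- l4 l4
    · intro heq
      have hval : (a : ℕ) = (b : ℕ) := by omega
      exact huv (by rw [show a = b from Fin.val_injective hval])
  · rintro ((a | a) | ((a | a) | (a | a))) ((b | b) | ((b | b) | (b | b))) harc <;>
      first
        | (simp [cliqueArc] at harc; done)
        | simp only [sched]
    -- vx ed arc
    · have hv : a ∈ (b.1 : Sym2 V) := harc
      split_ifs with h1 h2 h2
      · have := (eS ⟨a, h1⟩).isLt; omega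
      · have := (eS ⟨a, h1⟩).isLt; omega
      · exact absurd ((Finset.mem_filter.1 h2).2 a hv) h1
      · have := (eSc ⟨a, h1⟩).isLt; omega
    -- l1 l2
    · have := a.isLt; omega
    -- l2 l3
    · have := a.isLt; omega
    -- l3 l4
    · have := a.isLt; omega
  · rintro ((v | e) | ((i | j) | (k | m))) <;> simp only [sched]
    · split_ifs with h1
      · have := (eS ⟨v, h1⟩).isLt; omega
      · have := (eSc ⟨v, h1⟩).isLt; omega
    · split_ifs with h1
      · have := (eF ⟨e, h1⟩).isLt; omega
      · have := (eFc ⟨e, h1⟩).isLt; omega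
    · have := i.isLt; omega
    · have := j.isLt; omega
    · have := k.isLt; omega
    · have := m.isLt; omega

end Helpers

/-- **Correctness of the clique scheduling reduction.**  For a graph `G` and a positive
integer `L` with `L ≤ |V|` and `C(L,2) ≤ |E|`, the above bounded-height DAG admits a
schedule respecting the fixed processor assignment with makespan `|V| + |E|` iff `G`
contains a clique of size `L`. -/
theorem clique_scheduling {V : Type*} [Fintype V] [DecidableEq V] (G : SimpleGraph V)
    [DecidableRel G.Adj] (L : ℕ) (hL : 0 < L) (hLV : L ≤ Fintype.card V)
    (hLE : Nat.choose L 2 ≤ G.edgeFinset.card) :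
    (∃ τ : CliqueNode V G L → ℕ,
      (∀ v, 1 ≤ τ v) ∧
      (∀ u v, u ≠ v → cliqueProc G L u = cliqueProc G L v → τ u ≠ τ v) ∧
      (∀ u v, cliqueArc G L u v → τ u < τ v) ∧
      (∀ v, τ v ≤ Fintype.card V + G.edgeFinset.card)) ↔
    (∃ s : Finset V, G.IsNClique L s) := by
  constructor
  · rintro ⟨τ, h1, h2, h3, h4⟩
    by_cases hL1 : L = 1
    · subst hL1
      have hpos : 0 < Fintype.card V := by omega
      obtain ⟨v⟩ := Fintype.card_pos_iff.1 hpos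
      exact ⟨{v}, SimpleGraph.isNClique_one.2 ⟨v, rfl⟩⟩
    · have hL2 : 2 ≤ L := by omega
      rcases eq_or_lt_of_le hLV with hNV | hNV
      · refine ⟨univ, core hL2 univ G.edgeFinset (subset_refl _)
          (fun _ _ _ _ => mem_univ _) ?_ hLE⟩
        rw [card_univ]; omega
      · exact extract hL2 hNV hLE τ h1 h2 h3 h4
  · rintro ⟨S, hS⟩
    exact construct hLV hLE hS (cliqueEdges hS)
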